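/- arXiv:1206.5085 — 7 statements merged into one kernel-verified Lean document; each statement's English description precedes it below -/
import Mathlib

section
/- Let K be a field of characteristic zero, φ = (f,g) a K-algebra endomorphism of K[x,y] (f = φ(x), g = φ(y)), p a coordinate of K[x,y], and set p' = φ(p). Suppose p' ∉ K, and suppose s(z), t(z) ∈ K[z] are such that the endomorphism π of K[x,y] defined by x ↦ s(p'), y ↦ t(p') is a retraction of K[x,y] onto K[p'] (in particular π(p') = p'). Let π' : K[x,y] → K[z] be the K-algebra map with x ↦ s(z), y ↦ t(z). Then the K-subalgebra of K[z] generated by π'(f) and π'(g) is all of K[z]; moreover π'(p') = z. -/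
open MvPolynomial

noncomputable section

/-- The polynomial ring `K[x,y]`, with `x = X 0` and `y = X 1`. -/
abbrev P2 (K : Type*) [Field K] := MvPolynomial (Fin 2) K

/-- A subalgebra `R` of `K[x,y]` is a retract if it is the image of an idempotent
`K`-algebra endomorphism of `K[x,y]`. -/
def IsRetract (K : Type*) [Field K] (R : Subalgebra K (P2 K)) : Prop :=
  ∃ π : P2 K →ₐ[K] P2 K, π.comp π = π ∧ π.range = R

/-- A proper retract is a retract different from `K` (the bottom subalgebra) and
from `K[x,y]` itself. -/
def IsProperRetract (K : Type*) [Field K] (R : Subalgebra K (P2 K)) : Prop :=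
  IsRetract K R ∧ R ≠ ⊥ ∧ R ≠ ⊤

/-- `p` is a coordinate of `K[x,y]` if some `K`-algebra automorphism sends `x` to `p`. -/
def IsCoordinate (K : Type*) [Field K] (p : P2 K) : Prop :=
  ∃ σ : P2 K ≃ₐ[K] P2 K, σ (X 0) = p

lemma eq_C_of_isUnit_poly {R : Type*} [CommRing R] [IsDomain R] {u : Polynomial R}
    (hu : IsUnit u) : ∃ a : R, u = Polynomial.C a ∧ IsUnit a := by
  have hdeg := Polynomial.degree_eq_zero_of_isUnit hu
  have hu' := Polynomial.eq_C_of_degree_eq_zero hdeg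
  exact ⟨u.coeff 0, hu', Polynomial.isUnit_C.mp (hu' ▸ hu)⟩

lemma eq_C_of_isUnit_mv {K : Type*} [Field K] {u : MvPolynomial (Fin 2) K}
    (hu : IsUnit u) : ∃ c : K, u = C c := by
  set e := MvPolynomial.finSuccEquiv K 1
  obtain ⟨a, ha, hua⟩ := eq_C_of_isUnit_poly (hu.map e)
  set e1 := MvPolynomial.finSuccEquiv K 0
  obtain ⟨b, hb, _⟩ := eq_C_of_isUnit_poly (hua.map e1)
  set c := MvPolynomial.isEmptyAlgEquiv K (Fin 0) b
  have hbc : b = C c := by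
    have := (MvPolynomial.isEmptyAlgEquiv K (Fin 0)).symm_apply_apply b
    rw [← this]
    rfl
  refine ⟨c, e.injective ?_⟩
  have h1 : e1 (C c) = Polynomial.C (C c) := by
    simp [e1, MvPolynomial.finSuccEquiv_apply]
  have hac : a = C c := e1.injective (by rw [h1, ← hbc, ← hb])
  have h2 : e (C c) = Polynomial.C (C c) := by
    simp [e, MvPolynomial.finSuccEquiv_apply]
  rw [show e u = Polynomial.C a from ha, hac, h2]

lemma transcendental_of_ne_C {K : Type*} [Field K] {q : P2 K}
    (h : ∀ c : K, q ≠ C c) : Transcendental K q := by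
  intro halg
  have hint : IsIntegral K q := isAlgebraic_iff_isIntegral.mp halg
  have h0 : q ≠ 0 := fun h' => h 0 (by simp [h'])
  obtain ⟨c, hc⟩ := eq_C_of_isUnit_mv (hint.isUnit h0)
  exact h c hc

/-- **Lemma 1.** Let `φ = (f, g)` be an endomorphism of `K[x,y]`, `p` a coordinate and
`p' = φ(p) ∉ K`. If `π = (s(p'), t(p'))` is a retraction of `K[x,y]` onto `K[p']`, then
for `π' : K[x,y] → K[z]`, `x ↦ s(z)`, `y ↦ t(z)`, the subalgebra of `K[z]` generated by
`π'(f)` and `π'(g)` is all of `K[z]`; moreover `π'(p') = z`. -/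
theorem lemma1 {K : Type*} [Field K] [CharZero K]
    (φ : P2 K →ₐ[K] P2 K) (p : P2 K) (hp : IsCoordinate K p)
    (hp' : ∀ c : K, φ p ≠ C c)
    (s t : Polynomial K)
    (hretraction :
      ((MvPolynomial.aeval ![Polynomial.aeval (φ p) s, Polynomial.aeval (φ p) t] :
          P2 K →ₐ[K] P2 K).comp
        (MvPolynomial.aeval ![Polynomial.aeval (φ p) s, Polynomial.aeval (φ p) t]) =
        MvPolynomial.aeval ![Polynomial.aeval (φ p) s, Polynomial.aeval (φ p) t]) ∧
      (MvPolynomial.aeval ![Polynomial.aeval (φ p) s, Polynomial.aeval (φ p) t] :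
          P2 K →ₐ[K] P2 K).range = Algebra.adjoin K {φ p}) :
    Algebra.adjoin K
        {(MvPolynomial.aeval ![s, t] : P2 K →ₐ[K] Polynomial K) (φ (X 0)),
         (MvPolynomial.aeval ![s, t] : P2 K →ₐ[K] Polynomial K) (φ (X 1))} = ⊤ ∧
      (MvPolynomial.aeval ![s, t] : P2 K →ₐ[K] Polynomial K) (φ p) = Polynomial.X := by
  obtain ⟨hcomp, hrange⟩ := hretraction
  set p' := φ p with hp'def
  set π : P2 K →ₐ[K] P2 K :=
    MvPolynomial.aeval ![Polynomial.aeval p' s, Polynomial.aeval p' t] with hπ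
  set π' : P2 K →ₐ[K] Polynomial K := MvPolynomial.aeval ![s, t] with hπ'
  set E : Polynomial K →ₐ[K] P2 K := Polynomial.aeval p' with hE
  have hEπ' : E.comp π' = π := by
    apply MvPolynomial.algHom_ext
    intro i
    fin_cases i <;> simp [hE, hπ', hπ]
  have hmem : p' ∈ π.range := by
    rw [hrange]; exact Algebra.self_mem_adjoin_singleton K p'
  obtain ⟨w, hw0⟩ := hmem
  have hw : π w = p' := hw0
  have hfix : π p' = p' := by
    conv_lhs => rw [← hw]
    rw [← AlgHom.comp_apply, hcomp, hw]
  have hinj : Function.Injective E :=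
    transcendental_iff_injective.mp (transcendental_of_ne_C hp')
  have hX : π' p' = Polynomial.X := by
    apply hinj
    have h1 : E (π' p') = π p' := by rw [← AlgHom.comp_apply, hEπ']
    rw [h1, hfix]
    simp [hE]
  refine ⟨?_, hX⟩
  set A := π' (φ (X 0))
  set B := π' (φ (X 1))
  have hcomp2 : π'.comp φ = MvPolynomial.aeval ![A, B] := by
    apply MvPolynomial.algHom_ext
    intro i
    fin_cases i <;> simp [A, B]
  have hXmem : (Polynomial.X : Polynomial K) ∈ Algebra.adjoin K {A, B} := by
    rw [← hX]
    have h2 : π' p' = (MvPolynomial.aeval ![A, B]) p := by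
      rw [hp'def, ← AlgHom.comp_apply, hcomp2]
    rw [h2]
    have h3 : (MvPolynomial.aeval ![A, B]) p ∈ (MvPolynomial.aeval ![A, B]).range :=
      ⟨p, rfl⟩
    rw [← Algebra.adjoin_range_eq_range_aeval] at h3
    refine Algebra.adjoin_mono ?_ h3
    rintro x ⟨i, rfl⟩
    fin_cases i
    · exact Set.mem_insert _ _
    · exact Set.mem_insert_iff.mpr (Or.inr rfl)
  rw [eq_top_iff, ← Polynomial.adjoin_X (R := K)]
  exact Algebra.adjoin_le (Set.singleton_subset_iff.mpr hXmem)
end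
end

section
/- Let K be a field of characteristic zero and let φ be the K-algebra endomorphism of K[x,y] given by φ(x) = f = x + y·h₁(x,y) and φ(y) = g = y·h₂(x,y), where h₁, h₂ ∈ K[x,y] and h₂ ≠ 0. Suppose that for every coordinate p of K[x,y], the subalgebra K[φ(p)] is a proper retract of K[x,y]. Then for every positive integer n there exist s_n(z), t_n(z) ∈ K[z] with deg(s_n) ≥ 1, deg(t_n) ≥ 1 and deg(s_n) > n·deg(t_n), such that the K-subalgebra of K[z] generated by f(s_n(z), t_n(z)) and g(s_n(z), t_n(z)) is all of K[z]. -/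
open MvPolynomial

noncomputable section

/-!
Take the coordinate `p = y + (x + y^m)^2` with `m = (deg h₁ + 1)·n + 1`. Since `w = φ(p)` is
not constant it is transcendental, so a retraction onto `K[w]`, which sends `x, y` to `P(w), Q(w)`
and fixes `w`, forces `w(P, Q) = z`, i.e. `G + (F + G^m)^2 = z` for `F = f(P, Q)`, `G = g(P, Q)`.
Hence `F, G` generate `K[z]`, and `(P, Q)` is the required pair: the left side would have even
degree if `G` were constant or `deg F < m·deg G`, while `deg F ≤ (deg h₁ + 1)·max(deg P, deg Q)`
and `Q ∣ G`, so `m` was chosen large enough to force `deg Q ≥ 1` and `n·deg Q < deg P`.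
-/

theorem MvPolynomial.natDegree_aeval_le_totalDegree_mul {R σ : Type*} [CommSemiring R]
    {v : σ → Polynomial R} {D : ℕ} (hv : ∀ i, (v i).natDegree ≤ D) (p : MvPolynomial σ R) :
    (aeval v p).natDegree ≤ p.totalDegree * D := by
  classical
  rw [aeval_def, eval₂_eq]
  refine Polynomial.natDegree_sum_le_of_forall_le _ _ fun d hd => ?_
  refine (Polynomial.natDegree_C_mul_le _ _).trans <| (Polynomial.natDegree_prod_le _ _).trans ?_
  calc ∑ i ∈ d.support, (v i ^ d i).natDegree
      ≤ ∑ i ∈ d.support, d i * D :=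
        Finset.sum_le_sum fun i _ =>
          Polynomial.natDegree_pow_le.trans (Nat.mul_le_mul_left _ (hv i))
    _ = (d.sum fun _ e => e) * D := by rw [Finsupp.sum, Finset.sum_mul]
    _ ≤ p.totalDegree * D := Nat.mul_le_mul_right _ (le_totalDegree hd)

theorem Polynomial.even_natDegree_add_add_pow_sq {R : Type*} [Semiring R] [NoZeroDivisors R]
    {u v : Polynomial R} {m : ℕ} (h : v.natDegree = 0 ∨ u.natDegree < m * v.natDegree) :
    Even (v + (u + v ^ m) ^ 2).natDegree := by
  have hsq : ((u + v ^ m) ^ 2).natDegree = 2 * (u + v ^ m).natDegree := natDegree_pow _ _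
  rcases h with hv | hlt
  · rcases Nat.eq_zero_or_pos (u + v ^ m).natDegree with hs | hs
    · have hzero : (v + (u + v ^ m) ^ 2).natDegree = 0 :=
        Nat.le_zero.mp <| (natDegree_add_le _ _).trans (by simp [hv, hsq, hs])
      rw [hzero]; exact Even.zero
    · rw [natDegree_add_eq_right_of_natDegree_lt (by omega), hsq]
      exact even_two_mul _
  · have hs : (u + v ^ m).natDegree = m * v.natDegree := by
      rw [natDegree_add_eq_right_of_natDegree_lt (by rwa [natDegree_pow]), natDegree_pow]
    have hm : 0 < m := Nat.pos_of_ne_zero fun h0 => by simp [h0] at hlt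
    have hv_le : v.natDegree ≤ m * v.natDegree := Nat.le_mul_of_pos_left _ hm
    rw [natDegree_add_eq_right_of_natDegree_lt (by omega), hsq]
    exact even_two_mul _

theorem Polynomial.natDegree_eq_one_of_X_mem_adjoin {R : Type*} [CommRing R] [IsDomain R]
    {p : Polynomial R} (h : Polynomial.X ∈ Algebra.adjoin R {p}) : p.natDegree = 1 := by
  obtain ⟨r, hr⟩ := Algebra.adjoin_singleton_eq_range_aeval R p ▸ h
  have hcomp : r.comp p = Polynomial.X := hr
  have := congrArg Polynomial.natDegree hcomp
  rw [Polynomial.natDegree_comp, Polynomial.natDegree_X] at this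
  exact Nat.eq_one_of_mul_eq_one_left this

theorem Polynomial.natDegree_bounds_of_add_add_pow_sq_eq_X {R : Type*} [CommRing R] [IsDomain R]
    {F G P Q : Polynomial R} {c n m : ℕ} (hn : 0 < n) (hm : c * n < m)
    (hF : F.natDegree ≤ c * max P.natDegree Q.natDegree) (hQG : Q ∣ G)
    (hQ : Q.natDegree = 0 → P.natDegree = 1) (hX : G + (F + G ^ m) ^ 2 = X) :
    1 ≤ Q.natDegree ∧ n * Q.natDegree < P.natDegree := by
  have hodd : ¬ Even (G + (F + G ^ m) ^ 2).natDegree := by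
    rw [hX, natDegree_X]; exact Nat.not_even_one
  obtain ⟨hG, hmG⟩ : G.natDegree ≠ 0 ∧ m * G.natDegree ≤ F.natDegree := by
    simpa [not_or] using mt even_natDegree_add_add_pow_sq hodd
  have hQG_deg : Q.natDegree ≤ G.natDegree :=
    natDegree_le_of_dvd hQG fun h0 => hG (by simp [h0])
  have hcn : c ≤ c * n := Nat.le_mul_of_pos_right c hn
  rcases Nat.eq_zero_or_pos Q.natDegree with hQ0 | hQpos
  · have hFc : F.natDegree ≤ c := by simpa [hQ0, hQ hQ0] using hF
    have hmG' : m ≤ m * G.natDegree := Nat.le_mul_of_pos_right m (Nat.pos_of_ne_zero hG)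
    omega
  refine ⟨hQpos, not_le.mp fun hP => ?_⟩
  have hmax : max P.natDegree Q.natDegree ≤ n * Q.natDegree :=
    max_le hP (Nat.le_mul_of_pos_left _ hn)
  refine lt_irrefl F.natDegree ?_
  calc F.natDegree ≤ c * (n * Q.natDegree) := hF.trans (Nat.mul_le_mul_left c hmax)
    _ = (c * n) * Q.natDegree := (Nat.mul_assoc c n _).symm
    _ < m * Q.natDegree := Nat.mul_lt_mul_of_pos_right hm hQpos
    _ ≤ m * G.natDegree := Nat.mul_le_mul_left m hQG_deg
    _ ≤ F.natDegree := hmG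

theorem MvPolynomial.transcendental_of_notMem_bot {K σ : Type*} [Field K] {w : MvPolynomial σ K}
    (hw : w ∉ (⊥ : Subalgebra K (MvPolynomial σ K))) : Transcendental K w := by
  intro halg
  have hw0 : w ≠ 0 := fun h0 => hw (h0 ▸ zero_mem _)
  obtain ⟨r, -, rfl⟩ := isUnit_iff_eq_C_of_isReduced.mp (halg.isIntegral.isUnit hw0)
  exact hw (Subalgebra.algebraMap_mem _ r)

section

variable {K : Type*} [Field K]

theorem isCoordinate_X_one_add_pow (k m : ℕ) :
    IsCoordinate K (X 1 + (X 0 + X 1 ^ m) ^ k) := by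
  let σ : P2 K →ₐ[K] P2 K := aeval ![X 1 + (X 0 + X 1 ^ m) ^ k, X 0 + X 1 ^ m]
  let τ : P2 K →ₐ[K] P2 K := aeval ![X 1 - (X 0 - X 1 ^ k) ^ m, X 0 - X 1 ^ k]
  refine ⟨AlgEquiv.ofAlgHom σ τ (algHom_ext <| Fin.forall_fin_two.2 ⟨?_, ?_⟩)
    (algHom_ext <| Fin.forall_fin_two.2 ⟨?_, ?_⟩), by simp [σ]⟩ <;>
  simp [σ, τ]

theorem exists_aeval_eq_X_of_isRetract_adjoin {w : P2 K}
    (hr : IsRetract K (Algebra.adjoin K {w})) (hw : Transcendental K w) :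
    ∃ P Q : Polynomial K, aeval ![P, Q] w = Polynomial.X := by
  obtain ⟨π, hππ, hrange⟩ := hr
  have hπ_mem : ∀ q, π q ∈ (Polynomial.aeval w).range := fun q => by
    rw [← Algebra.adjoin_singleton_eq_range_aeval, ← hrange]; exact ⟨q, rfl⟩
  obtain ⟨P, hP⟩ := hπ_mem (X 0)
  obtain ⟨Q, hQ⟩ := hπ_mem (X 1)
  have hπ : (Polynomial.aeval w).comp (aeval ![P, Q]) = π :=
    algHom_ext <| Fin.forall_fin_two.2 ⟨by simpa using hP, by simpa using hQ⟩
  have hπw : π w = w := by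
    obtain ⟨e, rfl⟩ : w ∈ π.range := hrange ▸ Algebra.subset_adjoin rfl
    exact AlgHom.congr_fun hππ e
  refine ⟨P, Q, (transcendental_iff_injective.mp hw) ?_⟩
  rw [Polynomial.aeval_X, ← AlgHom.comp_apply, hπ, hπw]

theorem natDegree_eq_one_of_aeval_C_eq_X {P : Polynomial K} {c : K}
    {w : P2 K} (h : aeval ![P, Polynomial.C c] w = Polynomial.X) : P.natDegree = 1 := by
  refine Polynomial.natDegree_eq_one_of_X_mem_adjoin ?_
  have hrange : (aeval ![P, Polynomial.C c]).range ≤ Algebra.adjoin K {P} := by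
    rw [aeval_range, Algebra.adjoin_le_iff, Set.range_subset_iff, Fin.forall_fin_two]
    exact ⟨Algebra.subset_adjoin rfl, Subalgebra.algebraMap_mem _ c⟩
  exact hrange ⟨w, h⟩

end

theorem lemma2_general {K : Type*} [Field K]
    (h₁ h₂ : P2 K)
    (φ : P2 K →ₐ[K] P2 K)
    (hφx : φ (X 0) = X 0 + X 1 * h₁)
    (hφy : φ (X 1) = X 1 * h₂)
    (h : ∀ p : P2 K, IsCoordinate K p →
      IsProperRetract K (Algebra.adjoin K {φ p})) :
    ∀ n : ℕ, 0 < n → ∃ s t : Polynomial K,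
      1 ≤ s.natDegree ∧ 1 ≤ t.natDegree ∧ n * t.natDegree < s.natDegree ∧
      Algebra.adjoin K
        {(MvPolynomial.aeval ![s, t] : P2 K →ₐ[K] Polynomial K) (φ (X 0)),
         (MvPolynomial.aeval ![s, t] : P2 K →ₐ[K] Polynomial K) (φ (X 1))} = ⊤ := by
  intro n hn
  set m := (h₁.totalDegree + 1) * n + 1
  obtain ⟨hretract, hbot, -⟩ := h _ (isCoordinate_X_one_add_pow 2 m)
  have hw : Transcendental K (φ (X 1 + (X 0 + X 1 ^ m) ^ 2)) := transcendental_of_notMem_bot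
    fun hw => hbot (le_bot_iff.mp (Algebra.adjoin_le (Set.singleton_subset_iff.mpr hw)))
  obtain ⟨P, Q, hPQ⟩ := exists_aeval_eq_X_of_isRetract_adjoin hretract hw
  set F := aeval ![P, Q] (φ (X 0))
  set G := aeval ![P, Q] (φ (X 1))
  have hX : G + (F + G ^ m) ^ 2 = Polynomial.X := by
    simpa only [map_add, map_pow] using hPQ
  have hF : F.natDegree ≤ (h₁.totalDegree + 1) * max P.natDegree Q.natDegree := by
    refine (natDegree_aeval_le_totalDegree_mul (Fin.forall_fin_two.2
      ⟨le_max_left _ _, le_max_right _ _⟩) _).trans (Nat.mul_le_mul_right _ ?_)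
    rw [hφx]
    refine (totalDegree_add _ _).trans (max_le ?_ ((totalDegree_mul _ _).trans ?_)) <;>
      simp [totalDegree_X, add_comm]
  have hQG : Q ∣ G := by simp [G, hφy]
  have hQ : Q.natDegree = 0 → P.natDegree = 1 := fun hQ0 =>
    natDegree_eq_one_of_aeval_C_eq_X (Polynomial.eq_C_of_natDegree_eq_zero hQ0 ▸ hPQ)
  obtain ⟨hQ1, hPQdeg⟩ := Polynomial.natDegree_bounds_of_add_add_pow_sq_eq_X hn
    (Nat.lt_succ_self _) hF hQG hQ hX
  refine ⟨P, Q, Nat.one_le_of_lt hPQdeg, hQ1, hPQdeg, ?_⟩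
  have hFmem : F ∈ Algebra.adjoin K {F, G} := Algebra.subset_adjoin (by simp)
  have hGmem : G ∈ Algebra.adjoin K {F, G} := Algebra.subset_adjoin (by simp)
  rw [eq_top_iff, ← Polynomial.adjoin_X, Algebra.adjoin_le_iff, Set.singleton_subset_iff, ← hX]
  exact add_mem hGmem (pow_mem (add_mem hFmem (pow_mem hGmem m)) 2)

/-- **Lemma 2.** Let `φ = (x + y·h₁, y·h₂)` with `h₂ ≠ 0` be an endomorphism of `K[x,y]`
mapping each coordinate to a generator of a proper retract. Then for every `n ≥ 1` there
are `sₙ, tₙ ∈ K[z]` with `deg sₙ ≥ 1`, `deg tₙ ≥ 1` and `deg sₙ > n · deg tₙ` such that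
`K[f(sₙ,tₙ), g(sₙ,tₙ)] = K[z]`. -/
theorem lemma2 {K : Type*} [Field K] [CharZero K]
    (h₁ h₂ : P2 K) (hh₂ : h₂ ≠ 0)
    (φ : P2 K →ₐ[K] P2 K)
    (hφx : φ (X 0) = X 0 + X 1 * h₁)
    (hφy : φ (X 1) = X 1 * h₂)
    (h : ∀ p : P2 K, IsCoordinate K p →
      IsProperRetract K (Algebra.adjoin K {φ p})) :
    ∀ n : ℕ, 0 < n → ∃ s t : Polynomial K,
      1 ≤ s.natDegree ∧ 1 ≤ t.natDegree ∧ n * t.natDegree < s.natDegree ∧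
      Algebra.adjoin K
        {(MvPolynomial.aeval ![s, t] : P2 K →ₐ[K] Polynomial K) (φ (X 0)),
         (MvPolynomial.aeval ![s, t] : P2 K →ₐ[K] Polynomial K) (φ (X 1))} = ⊤ :=
  lemma2_general h₁ h₂ φ hφx hφy h
end
end

section
/- Let K be a field of characteristic zero and ψ = (f', g') a K-algebra endomorphism of K[x,y] such that for every coordinate p of K[x,y], the subalgebra K[ψ(p)] is a proper retract. Suppose there exists a K-algebra automorphism α of K[x,y] such that the composition ψ∘α has the form (x + y·h₁'(x,y), y·h₂'(x,y)) with h₂' ≠ 0. Then for every positive integer n there exist s_n(z), t_n(z) ∈ K[z] with deg(s_n) ≥ 1, deg(t_n) ≥ 1 and deg(s_n) > n·deg(t_n), such that the K-subalgebra of K[z] generated by f'(s_n(z), t_n(z)) and g'(s_n(z), t_n(z)) equals K[z]. -/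
open MvPolynomial

noncomputable section

section Auxiliary

variable {K : Type*} [Field K]

private lemma aux_finsupp_sum_fin2 (d : Fin 2 →₀ ℕ) : (d.sum fun _ e => e) = d 0 + d 1 := by
  rw [Finsupp.sum_fintype _ _ (fun _ => rfl), Fin.sum_univ_two]

/-- degree bound for bivariate evaluation -/
lemma natDegree_aeval_le (h : MvPolynomial (Fin 2) K) (A B : Polynomial K) :
    (aeval ![A, B] h).natDegree ≤ h.totalDegree * max A.natDegree B.natDegree := by
  rw [MvPolynomial.aeval_def, MvPolynomial.eval₂_eq']
  apply Polynomial.natDegree_sum_le_of_forall_le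
  intro d hd
  have hsum : d 0 + d 1 ≤ h.totalDegree := by
    rw [← aux_finsupp_sum_fin2 d]; exact le_totalDegree hd
  calc (algebraMap K (Polynomial K) (h.coeff d) * ∏ i, ![A, B] i ^ d i).natDegree
      ≤ (algebraMap K (Polynomial K) (h.coeff d)).natDegree
        + (∏ i, ![A, B] i ^ d i).natDegree := Polynomial.natDegree_mul_le
    _ ≤ 0 + (A ^ d 0 * B ^ d 1).natDegree := by
        rw [Fin.prod_univ_two]
        simp [Polynomial.natDegree_C]
    _ ≤ (A ^ d 0).natDegree + (B ^ d 1).natDegree := by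
        rw [zero_add]; exact Polynomial.natDegree_mul_le
    _ ≤ d 0 * A.natDegree + d 1 * B.natDegree := by
        gcongr <;> exact Polynomial.natDegree_pow_le
    _ ≤ d 0 * max A.natDegree B.natDegree + d 1 * max A.natDegree B.natDegree := by
        gcongr <;> simp
    _ = (d 0 + d 1) * max A.natDegree B.natDegree := by ring
    _ ≤ h.totalDegree * max A.natDegree B.natDegree := by gcongr


private lemma aux_natDegree_aeval_le (h : MvPolynomial (Fin 2) K) (A B : Polynomial K) :
    (aeval ![A, B] h).natDegree ≤ h.totalDegree * max A.natDegree B.natDegree := by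
  rw [MvPolynomial.aeval_def, MvPolynomial.eval₂_eq']
  apply Polynomial.natDegree_sum_le_of_forall_le
  intro d hd
  have hsum : d 0 + d 1 ≤ h.totalDegree := by
    rw [← aux_finsupp_sum_fin2 d]; exact le_totalDegree hd
  calc (algebraMap K (Polynomial K) (h.coeff d) * ∏ i, ![A, B] i ^ d i).natDegree
      ≤ (algebraMap K (Polynomial K) (h.coeff d)).natDegree
        + (∏ i, ![A, B] i ^ d i).natDegree := Polynomial.natDegree_mul_le
    _ ≤ 0 + (A ^ d 0 * B ^ d 1).natDegree := by
        rw [Fin.prod_univ_two]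
        simp [Polynomial.natDegree_C]
    _ ≤ (A ^ d 0).natDegree + (B ^ d 1).natDegree := by
        rw [zero_add]; exact Polynomial.natDegree_mul_le
    _ ≤ d 0 * A.natDegree + d 1 * B.natDegree := by
        gcongr <;> exact Polynomial.natDegree_pow_le
    _ ≤ d 0 * max A.natDegree B.natDegree + d 1 * max A.natDegree B.natDegree := by
        gcongr <;> simp
    _ = (d 0 + d 1) * max A.natDegree B.natDegree := by ring
    _ ≤ h.totalDegree * max A.natDegree B.natDegree := by gcongr


private lemma aux_aeval_injective (F : MvPolynomial (Fin 2) K)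
    (hF : 1 ≤ F.totalDegree) :
    Function.Injective (Polynomial.aeval F : Polynomial K →ₐ[K] MvPolynomial (Fin 2) K) := by
  set N : ℕ := F.totalDegree + 1 with hN
  set Ξ : MvPolynomial (Fin 2) K →ₐ[K] Polynomial K :=
    aeval ![Polynomial.X, Polynomial.X ^ N] with hΞ
  -- the image of `F` under the weighted substitution is nonconstant
  have hweight : ∀ d : Fin 2 →₀ ℕ, d ∈ F.support → d 0 < N := by
    intro d hd
    have : d 0 + d 1 ≤ F.totalDegree := by
      rw [← aux_finsupp_sum_fin2 d]; exact le_totalDegree hd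
    omega
  have hΞF : Ξ F = ∑ d ∈ F.support,
      Polynomial.C (F.coeff d) * Polynomial.X ^ (d 0 + N * d 1) := by
    rw [hΞ, MvPolynomial.aeval_def, MvPolynomial.eval₂_eq']
    apply Finset.sum_congr rfl
    intro d _
    rw [Fin.prod_univ_two]
    simp only [Matrix.cons_val_zero, Matrix.cons_val_one, Matrix.head_cons]
    rw [← pow_mul, ← pow_add, Polynomial.algebraMap_eq]
  obtain ⟨d', hd'mem, hd'⟩ : ∃ d' ∈ F.support, 1 ≤ (d'.sum fun _ e => e) := by
    rw [MvPolynomial.totalDegree] at hF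
    exact Finset.le_sup_iff (by norm_num) |>.mp hF
  have hd'sum : 1 ≤ d' 0 + d' 1 := by rwa [aux_finsupp_sum_fin2] at hd'
  have hcoeff : (Ξ F).coeff (d' 0 + N * d' 1) = F.coeff d' := by
    rw [hΞF, Polynomial.finset_sum_coeff]
    rw [Finset.sum_eq_single_of_mem d' hd'mem]
    · simp [Polynomial.coeff_C_mul, Polynomial.coeff_X_pow]
    · intro d hd hne
      rw [Polynomial.coeff_C_mul, Polynomial.coeff_X_pow, if_neg, mul_zero]
      intro heq
      apply hne
      have h0 : d 0 = d' 0 := by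
        have := congrArg (· % N) heq
        simpa [Nat.add_mul_mod_self_left, Nat.mod_eq_of_lt (hweight d hd),
          Nat.mod_eq_of_lt (hweight d' hd'mem)] using this.symm
      have h1 : d 1 = d' 1 := by
        rw [h0] at heq
        have hNpos : 0 < N := by omega
        exact Nat.eq_of_mul_eq_mul_left hNpos (by omega)
      ext i
      fin_cases i
      · exact h0
      · exact h1
  have hne : (Ξ F).natDegree ≠ 0 := by
    have h1 : 1 ≤ d' 0 + N * d' 1 := by
      have : d' 1 ≤ N * d' 1 := Nat.le_mul_of_pos_left _ (by omega)
      omega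
    have := Polynomial.le_natDegree_of_ne_zero (n := d' 0 + N * d' 1) (p := Ξ F)
      (by rw [hcoeff]; exact MvPolynomial.mem_support_iff.mp hd'mem)
    omega
  -- now conclude injectivity
  rw [injective_iff_map_eq_zero]
  intro P hP
  have hcomp : Polynomial.aeval (Ξ F) P = 0 := by
    have : (Ξ.comp (Polynomial.aeval F : Polynomial K →ₐ[K] MvPolynomial (Fin 2) K)) =
        (Polynomial.aeval (Ξ F) : Polynomial K →ₐ[K] Polynomial K) := by
      apply Polynomial.algHom_ext
      simp
    calc Polynomial.aeval (Ξ F) P = Ξ (Polynomial.aeval F P) := by rw [← this]; rfl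
    _ = 0 := by rw [hP, map_zero]
  rw [← Polynomial.comp_eq_aeval] at hcomp
  by_contra hP0
  have hlc := Polynomial.leadingCoeff_comp (p := P) (q := Ξ F) hne
  rw [hcomp, Polynomial.leadingCoeff_zero] at hlc
  have hg0 : (Ξ F) ≠ 0 := fun h => hne (by rw [h]; simp)
  have := mul_ne_zero (Polynomial.leadingCoeff_ne_zero.mpr hP0)
    (pow_ne_zero P.natDegree (Polynomial.leadingCoeff_ne_zero.mpr hg0))
  exact this hlc.symm


private lemma aux_key_degrees (n D : ℕ) (hn : 0 < n) (hD : 1 ≤ D)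
    (A B H₁ H₂ : Polynomial K)
    (hPQ : B.natDegree = 0 → ∃ P Q : Polynomial K, P.natDegree ≤ D ∧ Q.natDegree ≤ D - 1 ∧
      A + B * H₁ = P.comp A ∧ B * H₂ = Q.comp A)
    (hH₁ : H₁.natDegree ≤ (D - 1) * max A.natDegree B.natDegree)
    (hH₂ : H₂.natDegree ≤ (D - 1) * max A.natDegree B.natDegree)
    (heq : B * H₂ + ((A + B * H₁) + (B * H₂) ^ (D * n + 2)) ^ (D + 1) = Polynomial.X) :
    1 ≤ A.natDegree ∧ 1 ≤ B.natDegree ∧ n * B.natDegree < A.natDegree := by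
  set j : ℕ := D * n + 2 with hj
  set M : ℕ := D + 1 with hM
  set u : Polynomial K := A + B * H₁ with hu
  set v : Polynomial K := B * H₂ with hv
  set a : ℕ := A.natDegree with ha
  set b : ℕ := B.natDegree with hb
  -- v ≠ 0
  have hvne : v ≠ 0 := by
    intro h0
    rw [h0, zero_add, add_comm, zero_pow (by omega : j ≠ 0), zero_add] at heq
    have hdeg := congrArg Polynomial.natDegree heq
    rw [Polynomial.natDegree_pow, Polynomial.natDegree_X] at hdeg
    have : M ∣ 1 := ⟨u.natDegree, hdeg.symm⟩
    have := Nat.le_of_dvd one_pos this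
    omega
  have hBne : B ≠ 0 := fun h => hvne (by rw [hv, h, zero_mul])
  have hH₂ne : H₂ ≠ 0 := fun h => hvne (by rw [hv, h, mul_zero])
  have hvdeg : v.natDegree = b + H₂.natDegree := by
    rw [hv, Polynomial.natDegree_mul hBne hH₂ne]
  set W : Polynomial K := u + v ^ j with hW
  have hveq : v = Polynomial.X - W ^ M := by
    rw [← heq]; ring
  have hueq : u = W - v ^ j := by rw [hW]; ring
  rcases Nat.eq_zero_or_pos W.natDegree with hWd | hWd
  · -- Case 2 : W constant
    have hWM : (W ^ M).natDegree = 0 := by rw [Polynomial.natDegree_pow, hWd, mul_zero]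
    have hv1 : v.natDegree = 1 := by
      rw [hveq, sub_eq_add_neg, Polynomial.natDegree_add_eq_left_of_natDegree_lt,
        Polynomial.natDegree_X]
      rw [Polynomial.natDegree_neg, hWM, Polynomial.natDegree_X]; omega
    have hu_deg : u.natDegree = j := by
      rw [hueq, sub_eq_add_neg, Polynomial.natDegree_add_eq_right_of_natDegree_lt,
        Polynomial.natDegree_neg, Polynomial.natDegree_pow, hv1, mul_one]
      rw [Polynomial.natDegree_neg, Polynomial.natDegree_pow, hv1, mul_one, hWd]; omega
    have hu_deg2 : u.natDegree = D * n + 2 := by rw [hu_deg]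
    have hble : b ≤ 1 := by omega
    have hbne : b ≠ 0 := by
      intro hb0
      obtain ⟨P, Q, hP, hQ, hPu, hQv⟩ := hPQ hb0
      have hud : u.natDegree = P.natDegree * a := by
        rw [hPu, Polynomial.natDegree_comp, ha]
      have hvd : v.natDegree = Q.natDegree * a := by
        rw [hQv, Polynomial.natDegree_comp, ha]
      rw [hv1] at hvd
      have ha0 : a ≠ 0 := by
        intro h; rw [h, mul_zero] at hvd; exact one_ne_zero hvd
      have hle := Nat.le_of_dvd one_pos (Dvd.intro_left Q.natDegree hvd.symm)
      have ha1 : a = 1 := by omega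
      rw [ha1, mul_one] at hud
      have hDn : D * 1 ≤ D * n := Nat.mul_le_mul_left D hn
      omega
    have hb1 : b = 1 := by omega
    have hagt : n < a := by
      by_contra hle
      push_neg at hle
      have hmax : max a b ≤ n := by omega
      have h1 : (D - 1) * max a b ≤ D * n - n := by
        calc (D - 1) * max a b ≤ (D - 1) * n := by gcongr
        _ = D * n - n := by rw [Nat.sub_one_mul]
      have hBH₁ : (B * H₁).natDegree ≤ b + (D - 1) * max a b :=
        le_trans Polynomial.natDegree_mul_le (by gcongr)
      have hule : u.natDegree ≤ a + (b + (D - 1) * max a b) :=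
        le_trans (Polynomial.natDegree_add_le _ _)
          (le_trans (max_le_max le_rfl hBH₁) (max_le (Nat.le_add_right _ _) (Nat.le_add_left _ _)))
      have h3 : n ≤ D * n := Nat.le_mul_of_pos_left n (by omega)
      omega
    refine ⟨by omega, by omega, ?_⟩
    rw [hb1, mul_one]
    exact hagt
  · -- Case 1 : W nonconstant
    have hWM : (W ^ M).natDegree = M * W.natDegree := Polynomial.natDegree_pow W M
    have h2W : 2 * 1 ≤ M * W.natDegree := Nat.mul_le_mul (by omega) hWd
    have hvdeg' : v.natDegree = M * W.natDegree := by
      rw [hveq, sub_eq_add_neg, Polynomial.natDegree_add_eq_right_of_natDegree_lt,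
        Polynomial.natDegree_neg, hWM]
      rw [Polynomial.natDegree_neg, hWM, Polynomial.natDegree_X]
      omega
    have hv2 : 2 ≤ v.natDegree := by omega
    have hvj : (v ^ j).natDegree = j * v.natDegree := Polynomial.natDegree_pow v j
    -- deg u = j * deg v
    have hud : u.natDegree = j * v.natDegree := by
      by_contra hne
      rcases lt_or_gt_of_ne hne with hlt | hgt
      · have hWv : W.natDegree = (v ^ j).natDegree := by
          rw [hW, Polynomial.natDegree_add_eq_right_of_natDegree_lt (by omega)]
        rw [hvj, hvdeg'] at hWv
        have h2 : 2 * (1 * W.natDegree) ≤ j * (M * W.natDegree) :=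
          Nat.mul_le_mul (by omega) (Nat.mul_le_mul (by omega) le_rfl)
        omega
      · have hWu : W.natDegree = u.natDegree := by
          rw [hW, Polynomial.natDegree_add_eq_left_of_natDegree_lt (by omega)]
        rw [hWu] at hvdeg'
        have h2 : 1 * u.natDegree ≤ j * v.natDegree := by
          apply Nat.mul_le_mul (by omega)
          rw [hvdeg']
          exact Nat.le_mul_of_pos_left _ (by omega)
        omega
    have hbne : b ≠ 0 := by
      intro hb0
      obtain ⟨P, Q, hP, hQ, hPu, hQv⟩ := hPQ hb0
      have hud2 : u.natDegree = P.natDegree * a := by rw [hPu, Polynomial.natDegree_comp, ha]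
      have hvd2 : v.natDegree = Q.natDegree * a := by rw [hQv, Polynomial.natDegree_comp, ha]
      have hapos : 0 < a := by
        rcases Nat.eq_zero_or_pos a with h0 | h
        · rw [h0, mul_zero] at hvd2; omega
        · exact h
      have hQpos : 0 < Q.natDegree := by
        rcases Nat.eq_zero_or_pos Q.natDegree with h0 | h
        · rw [h0, zero_mul] at hvd2; omega
        · exact h
      have hthis : P.natDegree * a = (j * Q.natDegree) * a := by
        rw [← hud2, hud, hvd2, mul_assoc]
      have hPj : P.natDegree = j * Q.natDegree := Nat.eq_of_mul_eq_mul_right hapos hthis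
      have hjQ : j * 1 ≤ j * Q.natDegree := Nat.mul_le_mul_left j hQpos
      have hD1 : D * 1 ≤ D * n := Nat.mul_le_mul_left D hn
      omega
    -- b ≥ 1 : show n * b < a
    have hba : n * b < a := by
      by_contra hle
      push_neg at hle  -- a ≤ n * b
      have hb' : b ≤ n * b := Nat.le_mul_of_pos_left b hn
      have hmax : max a b ≤ n * b := max_le hle hb'
      have hvle : v.natDegree ≤ b + (D - 1) * (n * b) := by
        rw [hvdeg]
        have : H₂.natDegree ≤ (D - 1) * (n * b) := le_trans hH₂ (by gcongr)
        omega
      have hBH₁ : (B * H₁).natDegree ≤ b + (D - 1) * (n * b) :=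
        le_trans Polynomial.natDegree_mul_le
          (by gcongr; exact le_trans hH₁ (by gcongr))
      have hule : u.natDegree ≤ a + (b + (D - 1) * (n * b)) :=
        le_trans (Polynomial.natDegree_add_le _ _)
          (le_trans (max_le_max le_rfl hBH₁) (max_le (Nat.le_add_right _ _) (Nat.le_add_left _ _)))
      have hulow : D * (n * b) + 2 * b ≤ u.natDegree := by
        rw [hud]
        calc D * (n * b) + 2 * b = j * b := by rw [hj]; ring
        _ ≤ j * v.natDegree := Nat.mul_le_mul_left j (by omega)
      have hsub : (D - 1) * (n * b) = D * (n * b) - n * b := by rw [Nat.sub_one_mul]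
      have h1 : n * b ≤ D * (n * b) := Nat.le_mul_of_pos_left _ (by omega)
      omega
    exact ⟨by omega, by omega, hba⟩


end Auxiliary

/-- **Lemma 4.** Let `ψ = (f', g')` be an endomorphism of `K[x,y]` mapping each coordinate
to a generator of a proper retract. If there is an automorphism `α` such that `ψ ∘ α` has
the form `(x + y·h₁', y·h₂')` with `h₂' ≠ 0`, then for every `n ≥ 1` there are
`sₙ, tₙ ∈ K[z]` with `deg sₙ ≥ 1`, `deg tₙ ≥ 1`, `deg sₙ > n · deg tₙ` and
`K[f'(sₙ,tₙ), g'(sₙ,tₙ)] = K[z]`. -/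
theorem lemma4 {K : Type*} [Field K] [CharZero K]
    (ψ : P2 K →ₐ[K] P2 K)
    (h : ∀ p : P2 K, IsCoordinate K p →
      IsProperRetract K (Algebra.adjoin K {ψ p}))
    (α : P2 K ≃ₐ[K] P2 K) (h₁' h₂' : P2 K) (hh₂' : h₂' ≠ 0)
    (hx : ψ (α (X 0)) = X 0 + X 1 * h₁')
    (hy : ψ (α (X 1)) = X 1 * h₂') :
    ∀ n : ℕ, 0 < n → ∃ s t : Polynomial K,
      1 ≤ s.natDegree ∧ 1 ≤ t.natDegree ∧ n * t.natDegree < s.natDegree ∧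
      Algebra.adjoin K
        {(MvPolynomial.aeval ![s, t] : P2 K →ₐ[K] Polynomial K) (ψ (X 0)),
         (MvPolynomial.aeval ![s, t] : P2 K →ₐ[K] Polynomial K) (ψ (X 1))} = ⊤ := by
  intro n hn
  set D : ℕ := max h₁'.totalDegree h₂'.totalDegree + 1 with hD
  have hD1 : 1 ≤ D := by omega
  set j : ℕ := D * n + 2 with hj
  set M : ℕ := D + 1 with hM
  -- two elementary automorphisms
  set ε₁ : P2 K ≃ₐ[K] P2 K := AlgEquiv.ofAlgHom
      (aeval ![X 0 + X 1 ^ j, X 1]) (aeval ![X 0 - X 1 ^ j, X 1])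
      (by apply MvPolynomial.algHom_ext; intro i; fin_cases i <;> simp)
      (by apply MvPolynomial.algHom_ext; intro i; fin_cases i <;> simp) with hε₁
  set ε₂ : P2 K ≃ₐ[K] P2 K := AlgEquiv.ofAlgHom
      (aeval ![X 1 + X 0 ^ M, X 0]) (aeval ![X 1, X 0 - X 1 ^ M])
      (by apply MvPolynomial.algHom_ext; intro i; fin_cases i <;> simp)
      (by apply MvPolynomial.algHom_ext; intro i; fin_cases i <;> simp) with hε₂
  set r : P2 K := X 1 + (X 0 + X 1 ^ j) ^ M with hr
  have hσr : ((ε₂.trans ε₁).trans α) (X 0) = α r := by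
    have h2 : ε₂ (X 0) = X 1 + X 0 ^ M := by
      rw [hε₂]; simp [AlgEquiv.ofAlgHom]
    have h1 : ε₁ (X 1 + X 0 ^ M) = r := by
      rw [hε₁, hr]; simp [AlgEquiv.ofAlgHom]
    simp [AlgEquiv.trans_apply, h2, h1]
  set p : P2 K := α r with hp
  have hcoord : IsCoordinate K p := ⟨(ε₂.trans ε₁).trans α, hσr⟩
  obtain ⟨⟨π, hππ, hrange⟩, hbot, -⟩ := h p hcoord
  set F : P2 K := ψ p with hF
  -- F is nonconstant
  have hFtot : 1 ≤ F.totalDegree := by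
    by_contra hc
    push_neg at hc
    have h0 : F.totalDegree = 0 := by omega
    have hC : F = C (F.coeff 0) := by
      apply MvPolynomial.ext
      intro m
      by_cases hm : m = 0
      · subst hm; simp [MvPolynomial.coeff_C]
      · have hz : F.coeff m = 0 := by
          by_contra hne
          have hmem : m ∈ F.support := MvPolynomial.mem_support_iff.mpr hne
          have hall := (MvPolynomial.totalDegree_eq_zero_iff _ F).mp h0 m hmem
          exact hm (Finsupp.ext fun i => hall i)
        rw [hz, MvPolynomial.coeff_C, if_neg (fun hc => hm hc.symm)]
    apply hbot
    exact le_antisymm (Algebra.adjoin_le (by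
        rw [Set.singleton_subset_iff, hC, ← MvPolynomial.algebraMap_eq]
        exact Subalgebra.algebraMap_mem ⊥ _)) bot_le
  -- extract the section
  have hA0 : π (X 0) ∈ Algebra.adjoin K {F} := by rw [← hrange]; exact ⟨X 0, rfl⟩
  have hB0 : π (X 1) ∈ Algebra.adjoin K {F} := by rw [← hrange]; exact ⟨X 1, rfl⟩
  rw [Algebra.adjoin_singleton_eq_range_aeval] at hA0 hB0
  obtain ⟨A, hA⟩ := hA0
  obtain ⟨B, hB⟩ := hB0
  have hπF : π F = F := by
    have hFmem : F ∈ π.range := by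
      rw [hrange]; exact Algebra.self_mem_adjoin_singleton K F
    obtain ⟨w, hw⟩ := hFmem
    calc π F = (π.comp π) w := by rw [← hw]; rfl
    _ = π w := by rw [hππ]
    _ = F := hw
  set E : P2 K →ₐ[K] Polynomial K := aeval ![A, B] with hE
  have hEcomp : (Polynomial.aeval F).comp E = π := by
    apply MvPolynomial.algHom_ext
    intro i
    fin_cases i
    · simpa [hE] using hA
    · simpa [hE] using hB
  have hEF : E F = Polynomial.X := by
    apply aux_aeval_injective F hFtot
    have : Polynomial.aeval F (E F) = ((Polynomial.aeval F).comp E) F := rfl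
    rw [this, hEcomp, hπF, Polynomial.aeval_X]
  -- expand the equation
  set H₁ : Polynomial K := E h₁' with hH₁def
  set H₂ : Polynomial K := E h₂' with hH₂def
  have hexp : F = X 1 * h₂' + (X 0 + X 1 * h₁' + (X 1 * h₂') ^ j) ^ M := by
    rw [hF, hp, hr]
    simp only [map_add, map_pow, hx, hy]
  have heq : B * H₂ + ((A + B * H₁) + (B * H₂) ^ (D * n + 2)) ^ (D + 1) = Polynomial.X := by
    have := congrArg E hexp
    rw [hEF] at this
    simp only [map_add, map_pow, map_mul] at this
    have hEX0 : E (X 0) = A := by simp [hE]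
    have hEX1 : E (X 1) = B := by simp [hE]
    rw [hEX0, hEX1] at this
    rw [← hj, ← hM]
    exact this.symm
  -- the degree bounds
  have hmaxd : max h₁'.totalDegree h₂'.totalDegree = D - 1 := by omega
  have hH₁deg : H₁.natDegree ≤ (D - 1) * max A.natDegree B.natDegree := by
    refine le_trans (aux_natDegree_aeval_le h₁' A B) ?_
    gcongr
    omega
  have hH₂deg : H₂.natDegree ≤ (D - 1) * max A.natDegree B.natDegree := by
    refine le_trans (aux_natDegree_aeval_le h₂' A B) ?_
    gcongr
    omega
  -- the constant-B representation
  have hPQ : B.natDegree = 0 → ∃ P Q : Polynomial K, P.natDegree ≤ D ∧ Q.natDegree ≤ D - 1 ∧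
      A + B * H₁ = P.comp A ∧ B * H₂ = Q.comp A := by
    intro hb0
    set β : K := B.coeff 0 with hβ
    have hBC : B = Polynomial.C β := Polynomial.eq_C_of_natDegree_eq_zero hb0
    set q₁ : Polynomial K := aeval ![Polynomial.X, Polynomial.C β] h₁' with hq₁
    set q₂ : Polynomial K := aeval ![Polynomial.X, Polynomial.C β] h₂' with hq₂
    have hkey : E = (Polynomial.aeval A).comp (aeval ![Polynomial.X, Polynomial.C β]) := by
      apply MvPolynomial.algHom_ext
      intro i
      fin_cases i <;> simp [hE, hBC]
    have hmax1 : max (Polynomial.X (R := K)).natDegree (Polynomial.C β).natDegree = 1 := by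
      simp
    have hq₁deg : q₁.natDegree ≤ D - 1 := by
      refine le_trans (aux_natDegree_aeval_le h₁' _ _) ?_
      rw [hmax1, mul_one]
      omega
    have hq₂deg : q₂.natDegree ≤ D - 1 := by
      refine le_trans (aux_natDegree_aeval_le h₂' _ _) ?_
      rw [hmax1, mul_one]
      omega
    refine ⟨Polynomial.X + Polynomial.C β * q₁, Polynomial.C β * q₂, ?_, ?_, ?_, ?_⟩
    · refine le_trans (Polynomial.natDegree_add_le _ _) ?_
      have : (Polynomial.C β * q₁).natDegree ≤ 0 + (D - 1) :=
        le_trans Polynomial.natDegree_mul_le (by gcongr <;> simp [hq₁deg])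
      simp only [Polynomial.natDegree_X]
      omega
    · exact le_trans Polynomial.natDegree_mul_le (by simpa using hq₂deg)
    · rw [Polynomial.add_comp, Polynomial.X_comp, Polynomial.mul_comp, Polynomial.C_comp]
      have : H₁ = q₁.comp A := by
        rw [hH₁def, hkey, hq₁]
        rfl
      rw [this, hBC]
    · rw [Polynomial.mul_comp, Polynomial.C_comp]
      have : H₂ = q₂.comp A := by
        rw [hH₂def, hkey, hq₂]
        rfl
      rw [this, hBC]
  obtain ⟨hs1, ht1, hst⟩ := aux_key_degrees n D hn hD1 A B H₁ H₂ hPQ hH₁deg hH₂deg heq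
  refine ⟨A, B, hs1, ht1, hst, ?_⟩
  -- the generated subalgebra is everything
  set g₁ : Polynomial K := E (ψ (X 0)) with hg₁
  set g₂ : Polynomial K := E (ψ (X 1)) with hg₂
  have hXmem : Polynomial.X ∈ Algebra.adjoin K ({g₁, g₂} : Set (Polynomial K)) := by
    have hΘ : E.comp ψ = aeval ![g₁, g₂] := by
      apply MvPolynomial.algHom_ext
      intro i
      fin_cases i <;> simp [hg₁, hg₂]
    have hXeq : Polynomial.X = aeval ![g₁, g₂] p := by
      rw [← hΘ, ← hEF]
      rfl
    rw [hXeq]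
    have hmem : aeval ![g₁, g₂] p ∈ Algebra.adjoin K (Set.range ![g₁, g₂]) := by
      rw [Algebra.adjoin_range_eq_range_aeval]
      exact ⟨p, rfl⟩
    refine Algebra.adjoin_mono ?_ hmem
    intro y hy
    obtain ⟨i, hi⟩ := hy
    fin_cases i
    · left; exact hi.symm
    · right; exact hi.symm ▸ rfl
  rw [eq_top_iff, ← Polynomial.adjoin_X (R := K)]
  exact Algebra.adjoin_le (Set.singleton_subset_iff.mpr hXmem)

end
end

section
/- Let F be a field and F⟨x,y⟩ the free associative algebra on two generators x, y over F. The F-algebra endomorphism φ of F⟨x,y⟩ defined by φ(x) = x and φ(y) = y + xy − yx is not an automorphism of F⟨x,y⟩. -/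
/-!
Evaluate `F⟨x,y⟩` at the matrices `x ↦ E₁₁`, `y ↦ E₀₁`. Since `E₁₁ E₀₁ = 0` and `E₀₁ E₁₁ = E₀₁`,
this evaluation sends `φ y = y + xy - yx` to `0`, so its composite with `φ` has commutative image.
If `φ` were surjective, the evaluation itself would then have commutative image, yet `E₁₁` and
`E₀₁` do not commute.
-/

namespace FreeAlgebra

variable {R X A : Type*} [CommSemiring R] [Semiring A] [Algebra R A]

theorem lift_apply_mem_adjoin_range (f : X → A) (p : FreeAlgebra R X) :
    lift R f p ∈ Algebra.adjoin R (Set.range f) := by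
  rw [Algebra.adjoin_range_eq_range_freeAlgebra_lift]
  exact ⟨p, rfl⟩

theorem commute_lift_apply {f : X → A} (hf : ∀ i j, Commute (f i) (f j))
    (p q : FreeAlgebra R X) : Commute (lift R f p) (lift R f q) :=
  Algebra.commute_of_mem_adjoin_of_forall_mem_commute (lift_apply_mem_adjoin_range f q)
    fun _ ⟨j, hj⟩ => hj ▸ (Algebra.commute_of_mem_adjoin_of_forall_mem_commute
      (lift_apply_mem_adjoin_range f p) fun _ ⟨i, hi⟩ => hi ▸ hf j i).symm

theorem commute_of_comp_eq_lift {B : Type*} [Semiring B] [Algebra R B]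
    {φ : FreeAlgebra R X →ₐ[R] B} (hφ : Function.Surjective φ) {g : B →ₐ[R] A} {f : X → A}
    (hf : ∀ i j, Commute (f i) (f j)) (hg : g.comp φ = lift R f) (a b : B) :
    Commute (g a) (g b) := by
  obtain ⟨p, rfl⟩ := hφ a
  obtain ⟨q, rfl⟩ := hφ b
  simpa only [← AlgHom.comp_apply, hg] using commute_lift_apply hf p q

end FreeAlgebra

namespace Matrix

theorem not_commute_single_single {n R : Type*} [DecidableEq n] [Fintype n] [Semiring R]
    [Nontrivial R] {i j : n} (hij : i ≠ j) :
    ¬ Commute (single j j (1 : R)) (single i j 1) := by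
  intro h
  have h' := h.eq
  rw [single_mul_single_of_ne _ _ _ _ hij.symm, single_mul_single_same, one_mul] at h'
  simpa using congrFun (congrFun h' i) j

end Matrix

/-- The endomorphism `(x, y + xy - yx)` of the free associative algebra `F⟨x,y⟩`
is not an automorphism. -/
theorem freeAlgebraNotAuto {F : Type*} [Field F]
    (φ : FreeAlgebra F (Fin 2) →ₐ[F] FreeAlgebra F (Fin 2))
    (hx : φ (FreeAlgebra.ι F 0) = FreeAlgebra.ι F 0)
    (hy : φ (FreeAlgebra.ι F 1) =
      FreeAlgebra.ι F 1 + FreeAlgebra.ι F 0 * FreeAlgebra.ι F 1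
        - FreeAlgebra.ι F 1 * FreeAlgebra.ι F 0) :
    ¬ Function.Bijective φ := by
  intro hφ
  let e : FreeAlgebra F (Fin 2) →ₐ[F] Matrix (Fin 2) (Fin 2) F :=
    FreeAlgebra.lift F ![Matrix.single 1 1 1, Matrix.single 0 1 1]
  have he : e.comp φ = FreeAlgebra.lift F ![Matrix.single 1 1 1, 0] := by
    ext i
    fin_cases i
    · simp [e, hx]
    · simp [e, hy]
  have hcomm : ∀ i j, Commute ((![Matrix.single 1 1 1, 0] : Fin 2 → Matrix (Fin 2) (Fin 2) F) i)
      (![Matrix.single 1 1 1, 0] j) := by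
    intro i j
    fin_cases i <;> fin_cases j <;> simp [Commute.zero_left, Commute.zero_right]
  have hxy := FreeAlgebra.commute_of_comp_eq_lift hφ.2 hcomm he (FreeAlgebra.ι F 0) (FreeAlgebra.ι F 1)
  exact Matrix.not_commute_single_single (R := F) zero_ne_one (by simpa [e] using hxy)
end

section
/- Let F be a field, F⟨x,y⟩ the free associative algebra on two generators, and φ the F-algebra endomorphism with φ(x) = x, φ(y) = y + xy − yx. Let r ∈ F⟨x,y⟩ and let s(z), t(z) ∈ F[z] be such that the F-algebra endomorphism π of F⟨x,y⟩ defined by x ↦ s(r), y ↦ t(r) satisfies π(r) = r. Set r' = φ(r) and let π' be the F-algebra endomorphism of F⟨x,y⟩ defined by x ↦ s(r'), y ↦ t(r'). Then π'(r') = r'; in particular the subalgebra F[r'] is a retract of F⟨x,y⟩ with retraction π'. -/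
noncomputable section

/-- Let `φ = (x, y + xy - yx)` on `F⟨x,y⟩`, let `F[r]` be a retract with retraction
`π = (s(r), t(r))` (so `π(r) = r`), let `r' = φ(r)` and `π' = (s(r'), t(r'))`.
Then `π'(r') = r'`; in particular `F[r']` is a retract of `F⟨x,y⟩` with retraction `π'`. -/
theorem freeAlgebraRetractImage {F : Type*} [Field F]
    (φ : FreeAlgebra F (Fin 2) →ₐ[F] FreeAlgebra F (Fin 2))
    (hx : φ (FreeAlgebra.ι F 0) = FreeAlgebra.ι F 0)
    (hy : φ (FreeAlgebra.ι F 1) =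
      FreeAlgebra.ι F 1 + FreeAlgebra.ι F 0 * FreeAlgebra.ι F 1
        - FreeAlgebra.ι F 1 * FreeAlgebra.ι F 0)
    (r : FreeAlgebra F (Fin 2)) (s t : Polynomial F)
    (π : FreeAlgebra F (Fin 2) →ₐ[F] FreeAlgebra F (Fin 2))
    (hπx : π (FreeAlgebra.ι F 0) = Polynomial.aeval r s)
    (hπy : π (FreeAlgebra.ι F 1) = Polynomial.aeval r t)
    (hπr : π r = r)
    (π' : FreeAlgebra F (Fin 2) →ₐ[F] FreeAlgebra F (Fin 2))
    (hπ'x : π' (FreeAlgebra.ι F 0) = Polynomial.aeval (φ r) s)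
    (hπ'y : π' (FreeAlgebra.ι F 1) = Polynomial.aeval (φ r) t) :
    π' (φ r) = φ r ∧ π'.comp π' = π' ∧
      π'.range = Algebra.adjoin F {φ r} := by
  -- commuting polynomials in r'
  have comm : Polynomial.aeval (φ r) s * Polynomial.aeval (φ r) t
      = Polynomial.aeval (φ r) t * Polynomial.aeval (φ r) s := by
    rw [← map_mul, ← map_mul, mul_comm]
  -- key: π' ∘ φ = φ ∘ π
  have key : π'.comp φ = φ.comp π := by
    apply FreeAlgebra.hom_ext
    funext i
    fin_cases i
    · show π' (φ (FreeAlgebra.ι F 0)) = φ (π (FreeAlgebra.ι F 0))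
      rw [hx, hπ'x, hπx, ← Polynomial.aeval_algHom_apply]
    · show π' (φ (FreeAlgebra.ι F 1)) = φ (π (FreeAlgebra.ι F 1))
      rw [hy, hπy, ← Polynomial.aeval_algHom_apply, map_sub, map_add, map_mul, map_mul,
        hπ'x, hπ'y, comm]
      exact add_sub_cancel_right _ _
  have hπ'r : π' (φ r) = φ r := by
    have := congrArg (fun f : FreeAlgebra F (Fin 2) →ₐ[F] FreeAlgebra F (Fin 2) => f r) key
    simpa [hπr] using this
  refine ⟨hπ'r, ?_, ?_⟩
  · apply FreeAlgebra.hom_ext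
    funext i
    fin_cases i
    · show π' (π' (FreeAlgebra.ι F 0)) = π' (FreeAlgebra.ι F 0)
      rw [hπ'x, ← Polynomial.aeval_algHom_apply, hπ'r]
    · show π' (π' (FreeAlgebra.ι F 1)) = π' (FreeAlgebra.ι F 1)
      rw [hπ'y, ← Polynomial.aeval_algHom_apply, hπ'r]
  · apply le_antisymm
    · have hr : π'.range = Algebra.adjoin F (⇑π' '' Set.range (FreeAlgebra.ι F)) := by
        rw [← AlgHom.map_adjoin, FreeAlgebra.adjoin_range_ι, Algebra.map_top]
      rw [hr, Algebra.adjoin_le_iff]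
      rintro _ ⟨_, ⟨i, rfl⟩, rfl⟩
      fin_cases i
      · show π' (FreeAlgebra.ι F 0) ∈ Algebra.adjoin F {φ r}
        rw [hπ'x]; exact Polynomial.aeval_mem_adjoin_singleton F _
      · show π' (FreeAlgebra.ι F 1) ∈ Algebra.adjoin F {φ r}
        rw [hπ'y]; exact Polynomial.aeval_mem_adjoin_singleton F _
    · rw [Algebra.adjoin_le_iff, Set.singleton_subset_iff]
      exact ⟨φ r, hπ'r⟩
end
end

section
/- Let a, b, c, d be natural numbers with b ≥ d ≥ 1. Suppose that for every positive integer n there exist positive integers s, t with s > n·t such that (c·t + d·s) divides (a·t + b·s). Then d divides b and, writing k = b/d, one has a = c·k (equivalently a·d = b·c). -/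
/-!
Put `D = c t + d s`. Since `d (a t + b s) - b D = (a d - b c) t`, the divisor `D` divides
`(a d - b c) t`, whose absolute value is at most `(a d + b c) t`. Choosing `n = a d + b c + 1`
makes `D ≥ s > n t` exceed that bound, so `a d = b c`. Then `d (a t + b s) = b D`, and
`D ∣ a t + b s` gives `d D ∣ b D`, i.e. `d ∣ b`; cancelling `d` in `a d = b c` gives
`a = c (b / d)`.
-/

theorem dvd_cross_mul_of_dvd {R : Type*} [CommRing R] {a b c d s t : R}
    (h : c * t + d * s ∣ a * t + b * s) :
    c * t + d * s ∣ (a * d - b * c) * t := by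
  convert dvd_sub (h.mul_left d) (dvd_mul_left (c * t + d * s) b) using 1
  ring

theorem mul_eq_mul_of_dvd_of_mul_lt {a b c d s t : ℕ} (hd : 1 ≤ d) (ht : 0 < t)
    (hst : (a * d + b * c + 1) * t < s) (h : c * t + d * s ∣ a * t + b * s) :
    a * d = b * c := by
  have hdvd : ((c * t + d * s : ℕ) : ℤ) ∣ ((a : ℤ) * d - b * c) * t := by
    push_cast
    exact dvd_cross_mul_of_dvd (by exact_mod_cast h)
  have hlt : |((a : ℤ) * d - b * c) * t| < ((c * t + d * s : ℕ) : ℤ) := by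
    have hs : (s : ℤ) ≤ d * s := le_mul_of_one_le_left (by positivity) (by exact_mod_cast hd)
    have hst' : ((a : ℤ) * d + b * c + 1) * t < s := by exact_mod_cast hst
    have : (0 : ℤ) ≤ a * d * t := by positivity
    have : (0 : ℤ) ≤ b * c * t := by positivity
    have : (0 : ℤ) ≤ c * t := by positivity
    rw [sub_mul, abs_sub_lt_iff]
    push_cast
    constructor <;> linarith
  rcases mul_eq_zero.mp (Int.eq_zero_of_abs_lt_dvd hdvd hlt) with hcross | ht0
  · exact_mod_cast sub_eq_zero.mp hcross
  · exact absurd ht0 (by exact_mod_cast ht.ne')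

theorem degreeArithmetic_general (a b c d : ℕ) (hd : 1 ≤ d)
    (h : ∀ n : ℕ, 0 < n → ∃ s t : ℕ, 0 < s ∧ 0 < t ∧ n * t < s ∧
      (c * t + d * s) ∣ (a * t + b * s)) :
    d ∣ b ∧ a = c * (b / d) ∧ a * d = b * c := by
  obtain ⟨s, t, hs, ht, hst, hD⟩ := h (a * d + b * c + 1) (Nat.succ_pos _)
  have had : a * d = b * c := mul_eq_mul_of_dvd_of_mul_lt hd ht hst hD
  have hdb : d ∣ b := by
    have hcross : (a * t + b * s) * d = b * (c * t + d * s) := by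
      rw [add_mul, mul_right_comm, had]
      ring
    refine Nat.dvd_of_mul_dvd_mul_right (k := c * t + d * s)
      (Nat.add_pos_right _ (Nat.mul_pos hd hs)) ?_
    rw [← hcross, mul_comm d]
    exact mul_dvd_mul_right hD d
  obtain ⟨k, rfl⟩ := hdb
  refine ⟨dvd_mul_right d k, ?_, had⟩
  rw [Nat.mul_div_cancel_left k hd]
  exact Nat.eq_of_mul_eq_mul_right hd (by rw [had]; ring)

/-- The arithmetic core of the degree argument: if `b ≥ d ≥ 1` and for every `n ≥ 1`
there are positive integers `s, t` with `s > n·t` and `(c·t + d·s) ∣ (a·t + b·s)`,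
then `d ∣ b` and, with `k = b / d`, `a = c·k` (equivalently `a·d = b·c`). -/
theorem degreeArithmetic (a b c d : ℕ) (hbd : d ≤ b) (hd : 1 ≤ d)
    (h : ∀ n : ℕ, 0 < n → ∃ s t : ℕ, 0 < s ∧ 0 < t ∧ n * t < s ∧
      (c * t + d * s) ∣ (a * t + b * s)) :
    d ∣ b ∧ a = c * (b / d) ∧ a * d = b * c :=
  degreeArithmetic_general a b c d hd h
end

section
/- Let K be a field of characteristic zero and let φ be the K-algebra endomorphism of K[x,y] given by φ(x) = x and φ(y) = y·h(x,y) for some h ∈ K[x,y], h ≠ 0. Suppose that for every coordinate p of K[x,y], the subalgebra K[φ(p)] is a proper retract of K[x,y]. Then h is a nonzero constant, and consequently φ is a K-algebra automorphism of K[x,y]. -/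
/-!
If `K[f]` is a proper retract, then `f` is transcendental over `K`, so `K[f] ≅ K[t]` and the
retraction becomes a polynomial curve `(A(t), B(t))` with `f(A, B) = t`.

Write `h = ∑ h_j(x) y^j`. For `p = y` the curve gives `B · h(A, B) = t`, which is impossible for a
nonconstant `h ∈ K[y]`. If `h` involves `x`, take `p = y + (x + y^k)^2` with `k > deg_y h`: then
`V = B · h(A, B)` satisfies `V + (A + V^k)^2 = t`, which forces `deg A = k · deg V`. If `B` is
constant, `deg h(A, B)` is a multiple of `deg A`; otherwise the terms `h_j(A) B^j` have distinct
degrees and `deg h(A, B) ≥ deg A`. Both contradict `0 < deg h(A, B) ≤ deg V < deg A`.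
Finally `h = c ≠ 0` makes `φ` the diagonal automorphism `(x, y) ↦ (x, c y)`.
-/

open MvPolynomial

noncomputable section

open Polynomial.Bivariate

section Transcendence

variable {σ K : Type*} [Field K]

theorem MvPolynomial.transcendental_of_notMem_bot_s11 {f : MvPolynomial σ K}
    (hf : f ∉ (⊥ : Subalgebra K (MvPolynomial σ K))) : Transcendental K f := by
  intro halg
  have hf0 : f ≠ 0 := fun h0 => hf (h0 ▸ zero_mem _)
  obtain ⟨r, -, rfl⟩ := MvPolynomial.isUnit_iff_eq_C_of_isReduced.mp
    (halg.isIntegral.isUnit hf0)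
  exact hf (Algebra.mem_bot.mpr ⟨r, rfl⟩)

theorem MvPolynomial.exists_aeval_eq_X_of_retract {f : MvPolynomial σ K}
    (π : MvPolynomial σ K →ₐ[K] MvPolynomial σ K) (hπ : π.comp π = π)
    (hrange : π.range = Algebra.adjoin K {f})
    (hf : f ∉ (⊥ : Subalgebra K (MvPolynomial σ K))) :
    ∃ A : σ → Polynomial K, aeval A f = Polynomial.X := by
  have hmem : ∀ i, π (X i) ∈ (Polynomial.aeval f).range := fun i => by
    rw [← Algebra.adjoin_singleton_eq_range_aeval, ← hrange]
    exact ⟨X i, rfl⟩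
  choose A hA using hmem
  have hfactor : (Polynomial.aeval f).comp (aeval A) = π :=
    MvPolynomial.algHom_ext fun i => by simpa using hA i
  have hπf : π f = f := by
    obtain ⟨g, rfl⟩ : f ∈ π.range := hrange ▸ Algebra.self_mem_adjoin_singleton K f
    exact DFunLike.congr_fun hπ g
  refine ⟨A, (transcendental_iff_injective.mp (transcendental_of_notMem_bot_s11 hf)) ?_⟩
  rw [← AlgHom.comp_apply, hfactor, hπf, Polynomial.aeval_X]

end Transcendence

theorem IsProperRetract.exists_aeval_eq_X {K : Type*} [Field K] {f : P2 K}
    (hf : IsProperRetract K (Algebra.adjoin K {f})) :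
    ∃ A B : Polynomial K, aeval ![A, B] f = Polynomial.X := by
  obtain ⟨⟨π, hπ, hrange⟩, hbot, -⟩ := hf
  obtain ⟨v, hv⟩ := MvPolynomial.exists_aeval_eq_X_of_retract π hπ hrange
    fun hf => hbot (eq_bot_iff.mpr (Algebra.adjoin_singleton_le hf))
  exact ⟨v 0, v 1, by rwa [← FinVec.etaExpand_eq v] at hv⟩

section Bivariate

variable {R S : Type*} [CommSemiring R] [CommSemiring S] [Algebra R S]

theorem Polynomial.Bivariate.equivMvPolynomial_C (p : Polynomial R) :
    equivMvPolynomial R (Polynomial.C p) = Polynomial.aeval (MvPolynomial.X 0) p :=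
  Polynomial.aevalAeval_C _ _ p

theorem MvPolynomial.aeval_fin_two_eq_sum (h : MvPolynomial (Fin 2) R) (v : Fin 2 → S) :
    aeval v h = ∑ i ∈ Finset.range (((equivMvPolynomial R).symm h).natDegree + 1),
      Polynomial.aeval (v 0) (((equivMvPolynomial R).symm h).coeff i) * v 1 ^ i := by
  conv_lhs => rw [← (equivMvPolynomial R).apply_symm_apply h,
    ((equivMvPolynomial R).symm h).as_sum_range_C_mul_X_pow]
  simp [equivMvPolynomial_C, ← Polynomial.aeval_algHom_apply]

theorem MvPolynomial.aeval_eq_aeval_zero_of_coeff_natDegree_eq_zero {h : MvPolynomial (Fin 2) R}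
    (hG : ∀ i, (((equivMvPolynomial R).symm h).coeff i).natDegree = 0) (v : Fin 2 → S) :
    aeval v h = aeval ![0, v 1] h := by
  rw [aeval_fin_two_eq_sum, aeval_fin_two_eq_sum]
  refine Finset.sum_congr rfl fun i _ => ?_
  rw [Polynomial.eq_C_of_natDegree_eq_zero (hG i)]
  simp

theorem MvPolynomial.aeval_zero_vecCons_eq_aeval (h : MvPolynomial (Fin 2) R) (t : S) :
    aeval ![0, t] h = Polynomial.aeval t (aeval ![0, (Polynomial.X : Polynomial R)] h) := by
  rw [comp_aeval_apply]
  congr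
  funext i
  fin_cases i <;> simp

end Bivariate

theorem Nat.eq_of_mul_add_mul_eq {α β m n₁ n₂ i j : ℕ} (hβ : 0 < β) (hα : m * β < α)
    (hi : i ≤ m) (hj : j ≤ m) (he : α * n₁ + i * β = α * n₂ + j * β) : i = j := by
  have hlt : ∀ l ≤ m, l * β < α := fun l hl => (Nat.mul_le_mul_right β hl).trans_lt hα
  have hmod := congrArg (· % α) he
  simp only [Nat.mul_add_mod, Nat.mod_eq_of_lt (hlt i hi), Nat.mod_eq_of_lt (hlt j hj)] at hmod
  exact Nat.eq_of_mul_eq_mul_right hβ hmod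

namespace Polynomial

variable {R : Type*} [CommRing R] [IsDomain R]

theorem natDegree_aeval (p A : Polynomial R) :
    (aeval A p).natDegree = p.natDegree * A.natDegree := by
  rw [← comp_eq_aeval, natDegree_comp]

theorem aeval_ne_zero_of_natDegree_pos {p A : Polynomial R} (hp : p ≠ 0)
    (hA : 0 < A.natDegree) : aeval A p ≠ 0 := by
  rw [← comp_eq_aeval, Ne, comp_eq_zero_iff]
  rintro (h | ⟨-, h⟩)
  · exact hp h
  · rw [h, natDegree_C] at hA
    exact hA.false

/-- The degrees `deg A · deg G_i + i · deg B` of the nonzero terms are pairwise distinct modulo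
`deg A`, so no leading term cancels. -/
theorem le_natDegree_sum_aeval_coeff_mul_pow (G : Polynomial (Polynomial R))
    {A B : Polynomial R} (hB : 0 < B.natDegree) (hAB : G.natDegree * B.natDegree < A.natDegree)
    {j : ℕ} (hj : G.coeff j ≠ 0) :
    A.natDegree * (G.coeff j).natDegree + j * B.natDegree ≤
      (∑ i ∈ Finset.range (G.natDegree + 1), aeval A (G.coeff i) * B ^ i).natDegree := by
  have hA : 0 < A.natDegree := (Nat.zero_le _).trans_lt hAB
  have hterm : ∀ i, G.coeff i ≠ 0 → (aeval A (G.coeff i) * B ^ i).natDegree =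
      A.natDegree * (G.coeff i).natDegree + i * B.natDegree := fun i hi => by
    rw [natDegree_mul (aeval_ne_zero_of_natDegree_pos hi hA)
      (pow_ne_zero _ (ne_zero_of_natDegree_gt hB)), natDegree_aeval, natDegree_pow,
      mul_comm (G.coeff i).natDegree]
  have hcoeff : ∀ i, aeval A (G.coeff i) * B ^ i ≠ 0 → G.coeff i ≠ 0 :=
    fun i hi h0 => hi (by simp [h0])
  have hrange : ∀ i ∈ Finset.range (G.natDegree + 1), i ≤ G.natDegree :=
    fun i hi => Nat.lt_succ_iff.mp (Finset.mem_range.mp hi)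
  rw [natDegree_sum_eq_of_disjoint]
  · rw [← hterm j hj]
    exact Finset.le_sup (f := fun i => (aeval A (G.coeff i) * B ^ i).natDegree)
      (Finset.mem_range.mpr (Nat.lt_succ_of_le (le_natDegree_of_ne_zero hj)))
  · rintro i ⟨hi, hfi⟩ l ⟨hl, hfl⟩ hil heq
    simp only [Function.comp_apply, hterm i (hcoeff i hfi),
      hterm l (hcoeff l hfl)] at heq
    exact hil (Nat.eq_of_mul_add_mul_eq hB hAB (hrange i hi) (hrange l hl) heq)

theorem natDegree_pos_and_two_mul_le_of_add_sq_eq_X {V D : Polynomial R}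
    (h : V + D ^ 2 = X) : 0 < V.natDegree ∧ 2 * D.natDegree ≤ V.natDegree := by
  have hD : 2 * D.natDegree = (X - V).natDegree := by
    rw [← h, add_sub_cancel_left, natDegree_pow, mul_comm]
  by_cases hV : V.natDegree = 0
  · rw [eq_C_of_natDegree_eq_zero hV, natDegree_X_sub_C] at hD
    omega
  · have := natDegree_sub_le X V
    rw [natDegree_X] at this
    omega

end Polynomial

theorem MvPolynomial.natDegree_dvd_natDegree_aeval_vecCons_C {R : Type*} [CommRing R]
    [IsDomain R] (h : MvPolynomial (Fin 2) R) (A : Polynomial R) (b : R) :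
    A.natDegree ∣ (aeval ![A, Polynomial.C b] h).natDegree := by
  refine ⟨(aeval ![Polynomial.X, Polynomial.C b] h).natDegree, ?_⟩
  rw [mul_comm, ← Polynomial.natDegree_aeval, comp_aeval_apply]
  congr
  funext i
  fin_cases i <;> simp

section Plane

variable {K : Type*} [Field K]

theorem exists_eq_C_of_aeval_X_one_mul_eq_X {h : P2 K}
    (hG : ∀ i, (((equivMvPolynomial K).symm h).coeff i).natDegree = 0)
    {A B : Polynomial K} (hAB : aeval ![A, B] (X 1 * h) = Polynomial.X) :
    ∃ c : K, c ≠ 0 ∧ h = C c := by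
  set g : Polynomial K := aeval ![0, Polynomial.X] h
  have hg : aeval ![A, B] h = Polynomial.aeval B g := by
    rw [aeval_eq_aeval_zero_of_coeff_natDegree_eq_zero hG]
    exact aeval_zero_vecCons_eq_aeval h B
  have hcomp : (Polynomial.X * g).comp B = Polynomial.X := by
    rw [Polynomial.mul_comp, Polynomial.X_comp, Polynomial.comp_eq_aeval, ← hg, ← hAB, map_mul,
      aeval_X]
    rfl
  have hdeg : (Polynomial.X * g).natDegree = 1 := Nat.eq_one_of_mul_eq_one_right <| by
    rw [← Polynomial.natDegree_comp, hcomp, Polynomial.natDegree_X]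
  have hg0 : g ≠ 0 := by
    rintro hg0
    rw [hg0, mul_zero, Polynomial.natDegree_zero] at hdeg
    exact zero_ne_one hdeg
  rw [Polynomial.natDegree_X_mul hg0, Nat.add_eq_right] at hdeg
  obtain ⟨c, hc⟩ := Polynomial.natDegree_eq_zero.mp hdeg
  refine ⟨c, fun hc0 => hg0 (by rw [← hc, hc0, map_zero]), ?_⟩
  calc h = aeval X h := (aeval_X_left_apply h).symm
    _ = Polynomial.aeval (X 1 : P2 K) g := by
      rw [aeval_eq_aeval_zero_of_coeff_natDegree_eq_zero hG, aeval_zero_vecCons_eq_aeval]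
    _ = C c := by rw [← hc, Polynomial.aeval_C]; rfl

theorem aeval_X_one_mul_add_sq_ne_X {h : P2 K}
    (hG : ∃ j, (((equivMvPolynomial K).symm h).coeff j).natDegree ≠ 0) {k : ℕ}
    (hk : ((equivMvPolynomial K).symm h).natDegree < k) (hk1 : 1 < k) (A B : Polynomial K) :
    aeval ![A, B] (X 1 * h + (X 0 + (X 1 * h) ^ k) ^ 2) ≠ Polynomial.X := by
  intro hv
  obtain ⟨j, hj⟩ := hG
  simp only [map_add, map_mul, map_pow, aeval_X, Matrix.cons_val_zero, Matrix.cons_val_one] at hv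
  set G := (equivMvPolynomial K).symm h
  set w := aeval ![A, B] h
  obtain ⟨hV, hD⟩ := Polynomial.natDegree_pos_and_two_mul_le_of_add_sq_eq_X hv
  set d := (B * w).natDegree
  have hA : A.natDegree = k * d := by
    have hlt : (A + (B * w) ^ k).natDegree < ((B * w) ^ k).natDegree := by
      rw [Polynomial.natDegree_pow]
      nlinarith
    rw [show A = A + (B * w) ^ k - (B * w) ^ k by ring,
      Polynomial.natDegree_sub_eq_right_of_natDegree_lt hlt, Polynomial.natDegree_pow]
  have hBw : B * w ≠ 0 := Polynomial.ne_zero_of_natDegree_gt hV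
  have hd : d = B.natDegree + w.natDegree :=
    Polynomial.natDegree_mul (left_ne_zero_of_mul hBw) (right_ne_zero_of_mul hBw)
  rcases Nat.eq_zero_or_pos B.natDegree with hB | hB
  · obtain ⟨q, hq⟩ := natDegree_dvd_natDegree_aeval_vecCons_C h A (B.coeff 0)
    rw [← Polynomial.eq_C_of_natDegree_eq_zero hB] at hq
    change w.natDegree = A.natDegree * q at hq
    rw [hA] at hq
    rcases Nat.eq_zero_or_pos q with hq0 | hq0
    · rw [hq0, mul_zero] at hq
      omega
    · nlinarith
  · have hdeg : G.natDegree * B.natDegree < A.natDegree :=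
      calc G.natDegree * B.natDegree ≤ G.natDegree * d := Nat.mul_le_mul_left _ (by omega)
        _ < k * d := Nat.mul_lt_mul_of_pos_right hk hV
        _ = A.natDegree := hA.symm
    have hle := Polynomial.le_natDegree_sum_aeval_coeff_mul_pow G hB hdeg
      (j := j) (fun h0 => hj (by rw [h0, Polynomial.natDegree_zero]))
    have hsum := aeval_fin_two_eq_sum h ![A, B]
    simp only [Matrix.cons_val_zero, Matrix.cons_val_one] at hsum
    rw [← hsum] at hle
    change _ ≤ w.natDegree at hle
    have hAj := Nat.le_mul_of_pos_right A.natDegree (Nat.pos_of_ne_zero hj)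
    nlinarith

theorem isCoordinate_X_one : IsCoordinate K (X 1) :=
  ⟨renameEquiv K (Equiv.swap 0 1), by simp⟩

theorem isCoordinate_X_one_add_sq (k : ℕ) : IsCoordinate K (X 1 + (X 0 + X 1 ^ k) ^ 2) := by
  refine ⟨AlgEquiv.ofAlgHom (aeval ![X 1 + (X 0 + X 1 ^ k) ^ 2, X 0 + X 1 ^ k])
    (aeval ![X 1 - (X 0 - X 1 ^ 2) ^ k, X 0 - X 1 ^ 2]) ?_ ?_, by simp⟩ <;>
  · refine algHom_ext fun i => ?_
    fin_cases i <;>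
    · simp only [Fin.zero_eta, Fin.mk_one, AlgHom.comp_apply, AlgHom.id_apply, aeval_X,
        Matrix.cons_val_zero, Matrix.cons_val_one, map_add, map_sub, map_pow]
      ring

theorem bijective_of_map_X_one_eq_mul_C (φ : P2 K →ₐ[K] P2 K) {c : K} (hc : c ≠ 0)
    (hφx : φ (X 0) = X 0) (hφy : φ (X 1) = X 1 * C c) : Function.Bijective φ := by
  let ψ : P2 K →ₐ[K] P2 K := aeval ![X 0, X 1 * C c⁻¹]
  refine (AlgEquiv.ofAlgHom φ ψ ?_ ?_).bijective <;>
  · refine algHom_ext fun i => ?_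
    fin_cases i <;>
    · simp [ψ, hφx, hφy, mul_assoc, ← C_mul, hc]

end Plane

theorem finalStep_general {K : Type*} [Field K]
    (h : P2 K)
    (φ : P2 K →ₐ[K] P2 K)
    (hφx : φ (X 0) = X 0)
    (hφy : φ (X 1) = X 1 * h)
    (hr : ∀ p : P2 K, IsCoordinate K p →
      IsProperRetract K (Algebra.adjoin K {φ p})) :
    (∃ c : K, c ≠ 0 ∧ h = C c) ∧ Function.Bijective φ := by
  obtain ⟨c, hc, rfl⟩ : ∃ c : K, c ≠ 0 ∧ h = C c := by
    by_cases hG : ∀ i, (((equivMvPolynomial K).symm h).coeff i).natDegree = 0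
    · obtain ⟨A, B, hAB⟩ := (hr _ isCoordinate_X_one).exists_aeval_eq_X
      rw [hφy] at hAB
      exact exists_eq_C_of_aeval_X_one_mul_eq_X hG hAB
    · rw [not_forall] at hG
      let k := ((equivMvPolynomial K).symm h).natDegree + 2
      obtain ⟨A, B, hAB⟩ := (hr _ (isCoordinate_X_one_add_sq k)).exists_aeval_eq_X
      have hφp : φ (X 1 + (X 0 + X 1 ^ k) ^ 2) = X 1 * h + (X 0 + (X 1 * h) ^ k) ^ 2 := by
        simp only [map_add, map_pow, hφx, hφy]
      rw [hφp] at hAB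
      exact absurd hAB (aeval_X_one_mul_add_sq_ne_X hG (by omega) (by omega) A B)
  exact ⟨⟨c, hc, rfl⟩, bijective_of_map_X_one_eq_mul_C φ hc hφx hφy⟩

/-- Final step of the main proof: if `φ = (x, y·h)` with `h ≠ 0` maps each coordinate
to a generator of a proper retract, then `h` is a nonzero constant and `φ` is an
automorphism. -/
theorem finalStep {K : Type*} [Field K] [CharZero K]
    (h : P2 K) (hh : h ≠ 0)
    (φ : P2 K →ₐ[K] P2 K)
    (hφx : φ (X 0) = X 0)
    (hφy : φ (X 1) = X 1 * h)
    (hr : ∀ p : P2 K, IsCoordinate K p →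
      IsProperRetract K (Algebra.adjoin K {φ p})) :
    (∃ c : K, c ≠ 0 ∧ h = C c) ∧ Function.Bijective φ :=
  finalStep_general h φ hφx hφy hr
end
end
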